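/- arXiv:1105.4037 — 2 statements merged into one kernel-verified Lean document; each statement's English description precedes it below -/
import Mathlib

section
/- Let A be a real n×n matrix, B a real n×m matrix, and set d = dim V where V = Span{columns of B, AB, …, A^{n−1}B}. If d < n, then there exists an invertible n×n matrix P such that, writing vectors of ℝⁿ as blocks (x₁, x₂) ∈ ℝᵈ × ℝ^{n−d}, one has P⁻¹AP = [[A₁, A₃],[0, A₂]] and P⁻¹B = [[B₁],[0]], where A₁ is d×d, A₃ is d×(n−d), A₂ is (n−d)×(n−d), B₁ is d×m, and the pair (A₁, B₁) is controllable, i.e. Span{columns of B₁, A₁B₁, …, A₁^{d−1}B₁} = ℝᵈ. -/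
open MeasureTheory Matrix Set
open scoped ENNReal

noncomputable def mexp {ι : Type*} [Fintype ι] [DecidableEq ι] (M : Matrix ι ι ℝ) :
    Matrix ι ι ℝ :=
  NormedSpace.exp M

noncomputable def sol {ι κ : Type*} [Fintype ι] [DecidableEq ι] [Fintype κ]
    (A : Matrix ι ι ℝ) (B : Matrix ι κ ℝ) (x : ι → ℝ) (u : ℝ → κ → ℝ) (t : ℝ) : ι → ℝ :=
  (mexp (t • A)).mulVec x +
    ∫ s in (0:ℝ)..t, (mexp ((t - s) • A)).mulVec (B.mulVec (u s))

noncomputable def lagr {ι κ : Type*} [Fintype ι] [Fintype κ]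
    (W : Matrix ι ι ℝ) (U : Matrix κ κ ℝ) (z : ι → ℝ) (u : κ → ℝ) : ℝ :=
  (1/2) * (z ⬝ᵥ W.mulVec z) + (1/2) * (u ⬝ᵥ U.mulVec u)

noncomputable def lqCost {ι κ : Type*} [Fintype ι] [DecidableEq ι] [Fintype κ]
    (A : Matrix ι ι ℝ) (B : Matrix ι κ ℝ)
    (W : Matrix ι ι ℝ) (U : Matrix κ κ ℝ) (x y : ι → ℝ) : ℝ≥0∞ :=
  ⨅ u : {u : ℝ → κ → ℝ //
      MemLp u 2 (volume.restrict (Set.Icc (0:ℝ) 1)) ∧ sol A B x u 1 = y},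
    ∫⁻ t in Set.Icc (0:ℝ) 1, ENNReal.ofReal (lagr W U (sol A B x u.1 t) (u.1 t))

def kalmanSpan {ι κ : Type*} [Fintype ι] [DecidableEq ι] [Fintype κ]
    (A : Matrix ι ι ℝ) (B : Matrix ι κ ℝ) : Submodule ℝ (ι → ℝ) :=
  Submodule.span ℝ (⋃ k ∈ Finset.range (Fintype.card ι), Set.range (A ^ k * B)ᵀ)

def IsTransportMap {α β : Type*} [MeasurableSpace α] [MeasurableSpace β]
    (μ₀ : Measure α) (μ₁ : Measure β) (T : α → β) : Prop :=
  Measurable T ∧ Measure.map T μ₀ = μ₁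

noncomputable def transportCost {α β : Type*} [MeasurableSpace α]
    (c : α → β → ℝ≥0∞) (μ₀ : Measure α) (T : α → β) : ℝ≥0∞ :=
  ∫⁻ x, c x (T x) ∂μ₀

def IsOptimalMap {α β : Type*} [MeasurableSpace α] [MeasurableSpace β]
    (c : α → β → ℝ≥0∞) (μ₀ : Measure α) (μ₁ : Measure β) (T : α → β) : Prop :=
  IsTransportMap μ₀ μ₁ T ∧
    ∀ S, IsTransportMap μ₀ μ₁ S → transportCost c μ₀ T ≤ transportCost c μ₀ S

def msupp {α : Type*} [TopologicalSpace α] [MeasurableSpace α] (μ : Measure α) : Set α :=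
  {x | ∀ U ∈ nhds x, μ U ≠ 0}

noncomputable def pgrad {ι : Type*} [Fintype ι] [DecidableEq ι]
    (φ : (ι → ℝ) → ℝ) (x : ι → ℝ) : ι → ℝ :=
  fun i => fderiv ℝ φ x (Pi.single i 1)

noncomputable def mcosh {ι : Type*} [Fintype ι] [DecidableEq ι] (M : Matrix ι ι ℝ) :
    Matrix ι ι ℝ :=
  (1/2 : ℝ) • (mexp M + mexp (-M))

noncomputable def msinh {ι : Type*} [Fintype ι] [DecidableEq ι] (M : Matrix ι ι ℝ) :
    Matrix ι ι ℝ :=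
  (1/2 : ℝ) • (mexp M - mexp (-M))

/-!
The Kalman space `V` is `A`-invariant (by Cayley–Hamilton, `A ^ n * B` adds no new columns) and
contains the columns of `B`. In a basis of `ℝⁿ` whose first `d` vectors span `V`, the matrix of `A`
is therefore block upper triangular and that of `B` has a zero lower block. If `T` is the `n × d`
matrix of those first `d` vectors, then `A * T = T * A₁` and `B = T * B₁`, hence
`A ^ k * B = T * (A₁ ^ k * B₁)` and `V` is the image under `T` of the Kalman space of `(A₁, B₁)`.
As `V` has dimension `d`, so does the Kalman space of `(A₁, B₁)`, which is all of `ℝᵈ`.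
-/

open Module

open Polynomial in
theorem Matrix.pow_mem_span_pow_lt_card {R ι : Type*} [CommRing R] [Nontrivial R] [Fintype ι]
    [DecidableEq ι] (A : Matrix ι ι R) (k : ℕ) :
    A ^ k ∈ Submodule.span R ((A ^ ·) '' Set.Iio (Fintype.card ι)) := by
  classical
  have hdeg : X ^ k %ₘ A.charpoly ∈ degreeLT R (Fintype.card ι) := by
    rw [mem_degreeLT, ← A.charpoly_degree_eq_dim]
    exact degree_modByMonic_lt _ A.charpoly_monic
  rw [degreeLT_eq_span_X_pow] at hdeg
  have := Submodule.apply_mem_span_image_of_mem_span (aeval A).toLinearMap hdeg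
  rw [pow_eq_aeval_mod_charpoly]
  simpa [Set.image_image] using this

theorem Submodule.exists_basis_sum_adapted {K V : Type*} [DivisionRing K] [AddCommGroup V]
    [Module K V] [FiniteDimensional K V] (W : Submodule K V) {d r : ℕ}
    (hW : finrank K W = d) (hV : finrank K V = d + r) :
    ∃ b : Basis (Fin d ⊕ Fin r) K V,
      (∀ i, b (Sum.inl i) ∈ W) ∧ ∀ w ∈ W, ∀ i, b.repr w (Sum.inr i) = 0 := by
  obtain ⟨U, hWU⟩ := W.exists_isCompl
  have hU : finrank K U = r := by
    have := Submodule.finrank_add_eq_of_isCompl hWU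
    omega
  let b := ((finBasisOfFinrankEq K W hW).prod (finBasisOfFinrankEq K U hU)).map
    (W.prodEquivOfIsCompl U hWU)
  refine ⟨b, fun i => ?_, fun w hw i => ?_⟩
  · simp [b]
  · simp [b, (projectionOnto_apply_eq_zero_iff hWU.symm).2 hw]

section BlockTriangular

variable {R M : Type*} [CommRing R] [AddCommGroup M] [Module R M]
  {α β : Type*} [Fintype α] [Fintype β] {W : Submodule R M} {b : Basis (α ⊕ β) R M}

theorem LinearMap.toBlocks₂₁_toMatrix_eq_zero [DecidableEq α] [DecidableEq β]
    (hbW : ∀ i, b (Sum.inl i) ∈ W) (hW : ∀ w ∈ W, ∀ i, b.repr w (Sum.inr i) = 0)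
    {f : M →ₗ[R] M} (hf : ∀ w ∈ W, f w ∈ W) :
    (LinearMap.toMatrix b b f).toBlocks₂₁ = 0 := by
  ext i j
  simpa [toBlocks₂₁, LinearMap.toMatrix_apply] using hW _ (hf _ (hbW j)) i

theorem LinearMap.toRows₂_toMatrix_eq_zero (hW : ∀ w ∈ W, ∀ i, b.repr w (Sum.inr i) = 0)
    {N γ : Type*} [AddCommGroup N] [Module R N] [Fintype γ] [DecidableEq γ]
    (c : Basis γ R N) {g : N →ₗ[R] M} (hg : LinearMap.range g ≤ W) :
    (LinearMap.toMatrix c b g).toRows₂ = 0 := by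
  ext i j
  simpa [toRows₂, LinearMap.toMatrix_apply] using hW _ (hg (LinearMap.mem_range_self g (c j))) i

end BlockTriangular

section ChangeOfBasis

variable {R : Type*} [CommRing R] {ι κ : Type*} [Fintype ι] [DecidableEq ι]

theorem LinearMap.toMatrix_reindex {M N : Type*} [AddCommGroup M] [Module R M] [AddCommGroup N]
    [Module R N] {α β ι' : Type*} [Fintype α] [DecidableEq α] [Fintype β] [Fintype ι']
    (b : Basis α R M) (c : Basis β R N) (e₁ : α ≃ ι) (e₂ : β ≃ ι') (f : M →ₗ[R] N) :
    LinearMap.toMatrix (b.reindex e₁) (c.reindex e₂) f =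
      reindex e₂ e₁ (LinearMap.toMatrix b c f) := by
  ext i j
  simp [LinearMap.toMatrix_apply]

theorem Matrix.inv_basisFun_toMatrix (b : Basis ι R (ι → R)) :
    ((Pi.basisFun R ι).toMatrix b)⁻¹ = b.toMatrix (Pi.basisFun R ι) :=
  inv_eq_left_inv (b.toMatrix_mul_toMatrix_flip _)

theorem Matrix.inv_basisFun_toMatrix_mul [Fintype κ] [DecidableEq κ] (b : Basis ι R (ι → R))
    (B : Matrix ι κ R) :
    ((Pi.basisFun R ι).toMatrix b)⁻¹ * B = LinearMap.toMatrix (Pi.basisFun R κ) b (toLin' B) := by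
  have := basis_toMatrix_mul_linearMap_toMatrix (b' := Pi.basisFun R κ) (c := b)
    (c' := Pi.basisFun R ι) (toLin' B)
  rwa [← Matrix.toLin_eq_toLin', LinearMap.toMatrix_toLin, ← inv_basisFun_toMatrix] at this

theorem Matrix.inv_basisFun_toMatrix_mul_mul (b : Basis ι R (ι → R)) (A : Matrix ι ι R) :
    ((Pi.basisFun R ι).toMatrix b)⁻¹ * A * (Pi.basisFun R ι).toMatrix b =
      LinearMap.toMatrix b b (toLin' A) := by
  have := basis_toMatrix_mul_linearMap_toMatrix_mul_basis_toMatrix (b := b)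
    (b' := Pi.basisFun R ι) (c := b) (c' := Pi.basisFun R ι) (toLin' A)
  rwa [LinearMap.toMatrix_eq_toMatrix', LinearMap.toMatrix'_toLin', ← inv_basisFun_toMatrix] at this

end ChangeOfBasis

theorem Matrix.reindex_fromRows_zero {R ι α β γ : Type*} [CommRing R] [Fintype α] [DecidableEq α]
    (e : α ⊕ β ≃ ι) (X : Matrix α γ R) :
    reindex e (Equiv.refl γ) (fromRows X (0 : Matrix β γ R)) =
      reindex e (Equiv.refl α) (fromRows (1 : Matrix α α R) (0 : Matrix β α R)) * X := by
  have : fromRows X (0 : Matrix β γ R) = fromRows (1 : Matrix α α R) (0 : Matrix β α R) * X := by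
    rw [fromRows_mul, Matrix.one_mul, Matrix.zero_mul]
  rw [this]
  rfl

section Kalman

variable {ι ι' κ : Type*} [Fintype ι] [DecidableEq ι] [Fintype ι'] [DecidableEq ι'] [Fintype κ]

theorem pow_mul_transpose_mem_kalmanSpan (A : Matrix ι ι ℝ) (B : Matrix ι κ ℝ) (k : ℕ) (j : κ) :
    (A ^ k * B)ᵀ j ∈ kalmanSpan A B := by
  suffices ∀ M ∈ Submodule.span ℝ ((A ^ ·) '' Set.Iio (Fintype.card ι)),
      (M * B)ᵀ j ∈ kalmanSpan A B from this _ (A.pow_mem_span_pow_lt_card k)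
  intro M hM
  induction hM using Submodule.span_induction with
  | mem M hM =>
    obtain ⟨i, hi, rfl⟩ := hM
    exact Submodule.subset_span (Set.mem_biUnion (Finset.mem_range.2 hi) ⟨j, rfl⟩)
  | zero => rw [Matrix.zero_mul]; exact zero_mem _
  | add M N _ _ hM hN => rw [Matrix.add_mul]; exact add_mem hM hN
  | smul c M _ hM => rw [Matrix.smul_mul]; exact Submodule.smul_mem _ c hM

theorem kalmanSpan_eq_span_iUnion (A : Matrix ι ι ℝ) (B : Matrix ι κ ℝ) :
    kalmanSpan A B = Submodule.span ℝ (⋃ k, Set.range (A ^ k * B)ᵀ) := by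
  refine le_antisymm (Submodule.span_mono ?_) (Submodule.span_le.2 ?_)
  · exact Set.iUnion₂_subset fun k _ => Set.subset_iUnion (fun k => Set.range (A ^ k * B)ᵀ) k
  · rintro _ ⟨_, ⟨k, rfl⟩, j, rfl⟩
    exact pow_mul_transpose_mem_kalmanSpan A B k j

theorem range_mulVecLin_le_kalmanSpan (A : Matrix ι ι ℝ) (B : Matrix ι κ ℝ) :
    LinearMap.range B.mulVecLin ≤ kalmanSpan A B := by
  rw [Matrix.range_mulVecLin, Submodule.span_le]
  rintro _ ⟨j, rfl⟩
  have := pow_mul_transpose_mem_kalmanSpan A B 0 j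
  rwa [pow_zero, Matrix.one_mul] at this

theorem mulVec_mem_kalmanSpan (A : Matrix ι ι ℝ) (B : Matrix ι κ ℝ) {v : ι → ℝ}
    (hv : v ∈ kalmanSpan A B) : A *ᵥ v ∈ kalmanSpan A B := by
  rw [kalmanSpan_eq_span_iUnion] at hv
  induction hv using Submodule.span_induction with
  | mem v hv =>
    obtain ⟨k, j, rfl⟩ := Set.mem_iUnion.1 hv
    have : A *ᵥ (A ^ k * B)ᵀ j = (A ^ (k + 1) * B)ᵀ j := by rw [pow_succ', Matrix.mul_assoc]; rfl
    rw [this]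
    exact pow_mul_transpose_mem_kalmanSpan A B (k + 1) j
  | zero => simp
  | add v w _ _ hv hw => simpa [Matrix.mulVec_add] using add_mem hv hw
  | smul c v _ hv => simpa [Matrix.mulVec_smul] using Submodule.smul_mem _ c hv

theorem kalmanSpan_eq_map_of_mul_eq_mul {A : Matrix ι ι ℝ} {B : Matrix ι κ ℝ}
    {A' : Matrix ι' ι' ℝ} {B' : Matrix ι' κ ℝ} {T : Matrix ι ι' ℝ}
    (hA : A * T = T * A') (hB : B = T * B') :
    kalmanSpan A B = (kalmanSpan A' B').map T.mulVecLin := by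
  have hpow : ∀ k, A ^ k * B = T * (A' ^ k * B') := by
    intro k
    induction k with
    | zero => simp [hB]
    | succ k ih =>
      rw [pow_succ', Matrix.mul_assoc, ih, ← Matrix.mul_assoc, hA, pow_succ', Matrix.mul_assoc,
        Matrix.mul_assoc]
  rw [kalmanSpan_eq_span_iUnion, kalmanSpan_eq_span_iUnion, Submodule.map_span, Set.image_iUnion]
  congr 1
  refine Set.iUnion_congr fun k => ?_
  rw [hpow]
  exact Set.range_comp T.mulVecLin (A' ^ k * B')ᵀ

theorem kalmanSpan_eq_top_of_mul_eq_mul {A : Matrix ι ι ℝ} {B : Matrix ι κ ℝ}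
    {A' : Matrix ι' ι' ℝ} {B' : Matrix ι' κ ℝ} {T : Matrix ι ι' ℝ}
    (hA : A * T = T * A') (hB : B = T * B')
    (hd : finrank ℝ (kalmanSpan A B) = Fintype.card ι') : kalmanSpan A' B' = ⊤ := by
  refine Submodule.eq_top_of_finrank_eq (le_antisymm (Submodule.finrank_le _) ?_)
  rw [finrank_fintype_fun_eq_card, ← hd, kalmanSpan_eq_map_of_mul_eq_mul hA hB]
  exact Submodule.finrank_map_le _ _

end Kalman

theorem kalmanSpan_eq_top_of_blockTriangular {ι κ α β : Type*} [Fintype ι] [DecidableEq ι]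
    [Fintype κ] [Fintype α] [DecidableEq α] [Fintype β] (e : α ⊕ β ≃ ι)
    {P A : Matrix ι ι ℝ} {B : Matrix ι κ ℝ} {A₁ : Matrix α α ℝ} {A₃ : Matrix α β ℝ}
    {A₂ : Matrix β β ℝ} {B₁ : Matrix α κ ℝ} (hP : IsUnit P)
    (hA : P⁻¹ * A * P = reindex e e (fromBlocks A₁ A₃ 0 A₂))
    (hB : P⁻¹ * B = reindex e (Equiv.refl κ) (fromRows B₁ 0))
    (hd : finrank ℝ (kalmanSpan A B) = Fintype.card α) :
    kalmanSpan A₁ B₁ = ⊤ := by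
  -- the columns of `P * E` are the first `card α` columns of `P`
  set E : Matrix ι α ℝ := reindex e (Equiv.refl α) (fromRows 1 0) with hE
  have hPP : P * P⁻¹ = 1 := P.mul_nonsing_inv ((P.isUnit_iff_isUnit_det).1 hP)
  refine kalmanSpan_eq_top_of_mul_eq_mul (T := P * E) ?_ ?_ hd
  · calc A * (P * E) = P * (P⁻¹ * A * P) * E := by
          simp only [Matrix.mul_assoc, ← Matrix.mul_assoc P P⁻¹, hPP, Matrix.one_mul]
      _ = P * E * A₁ := by
          rw [hA, Matrix.mul_assoc, Matrix.mul_assoc, hE, ← reindex_fromRows_zero, reindex_apply,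
            reindex_apply, reindex_apply, submatrix_mul_equiv, fromBlocks_mul_fromRows]
          simp
  · calc B = P * (P⁻¹ * B) := by rw [← Matrix.mul_assoc, hPP, Matrix.one_mul]
      _ = P * E * B₁ := by rw [hB, reindex_fromRows_zero, ← hE, Matrix.mul_assoc]

/-- Kalman decomposition in the non-controllable case `d < n`. -/
theorem kalman_decomposition (n m d : ℕ)
    (A : Matrix (Fin n) (Fin n) ℝ) (B : Matrix (Fin n) (Fin m) ℝ)
    (hd : d = Module.finrank ℝ (kalmanSpan A B)) (hdn : d < n) :
    ∃ (P : Matrix (Fin n) (Fin n) ℝ) (A₁ : Matrix (Fin d) (Fin d) ℝ)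
      (A₃ : Matrix (Fin d) (Fin (n - d)) ℝ) (A₂ : Matrix (Fin (n - d)) (Fin (n - d)) ℝ)
      (B₁ : Matrix (Fin d) (Fin m) ℝ),
      IsUnit P ∧
      P⁻¹ * A * P =
        Matrix.reindex (finSumFinEquiv.trans (finCongr (Nat.add_sub_cancel' hdn.le)))
          (finSumFinEquiv.trans (finCongr (Nat.add_sub_cancel' hdn.le)))
          (Matrix.fromBlocks A₁ A₃ 0 A₂) ∧
      P⁻¹ * B =
        Matrix.reindex (finSumFinEquiv.trans (finCongr (Nat.add_sub_cancel' hdn.le)))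
          (Equiv.refl (Fin m))
          (Matrix.of (Sum.elim B₁ (0 : Matrix (Fin (n - d)) (Fin m) ℝ))) ∧
      kalmanSpan A₁ B₁ = ⊤ := by
  set e := finSumFinEquiv.trans (finCongr (Nat.add_sub_cancel' hdn.le))
  obtain ⟨b, hbV, hVb⟩ := (kalmanSpan A B).exists_basis_sum_adapted (r := n - d) hd.symm
    (by rw [finrank_fin_fun]; omega)
  set M := LinearMap.toMatrix b b (toLin' A)
  set N := LinearMap.toMatrix (Pi.basisFun ℝ (Fin m)) b (toLin' B)
  have hM : M = fromBlocks M.toBlocks₁₁ M.toBlocks₁₂ 0 M.toBlocks₂₂ := by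
    rw [← LinearMap.toBlocks₂₁_toMatrix_eq_zero hbV hVb (f := toLin' A)
      (fun v hv => mulVec_mem_kalmanSpan A B hv), fromBlocks_toBlocks]
  have hN : N = fromRows N.toRows₁ 0 := by
    rw [← LinearMap.toRows₂_toMatrix_eq_zero hVb (Pi.basisFun ℝ (Fin m)) (g := toLin' B)
      (range_mulVecLin_le_kalmanSpan A B), fromRows_toRows]
  let P := (Pi.basisFun ℝ (Fin n)).toMatrix (b.reindex e)
  have hP : IsUnit P := by
    let := (Pi.basisFun ℝ (Fin n)).invertibleToMatrix (b.reindex e)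
    exact isUnit_of_invertible P
  have hPA : P⁻¹ * A * P = reindex e e (fromBlocks M.toBlocks₁₁ M.toBlocks₁₂ 0 M.toBlocks₂₂) := by
    rw [inv_basisFun_toMatrix_mul_mul, LinearMap.toMatrix_reindex, ← hM]
  have hPB : P⁻¹ * B = reindex e (Equiv.refl (Fin m)) (fromRows N.toRows₁ 0) := by
    rw [inv_basisFun_toMatrix_mul, ← (Pi.basisFun ℝ (Fin m)).reindex_refl,
      LinearMap.toMatrix_reindex, ← hN]
  exact ⟨P, _, _, _, _, hP, hPA, hPB,
    kalmanSpan_eq_top_of_blockTriangular e hP hPA hPB (by rw [Fintype.card_fin, hd])⟩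
end

section
/- Assume the linear control system ẋ = Ax + Bu is controllable. Set Q₂ = ∫₀¹ (R₂(t)* W R₂(t) + R₄(t)* B U⁻¹ B* R₄(t)) dt. Then the matrices D = R₂(1)⁻¹R₁(1) and F = (R₂(1)⁻¹)* Q₂ R₂(1)⁻¹ are symmetric and positive definite. -/
open MeasureTheory Matrix Set
open scoped ENNReal

/-!
Write `S = B U⁻¹ Bᵀ`. For `z = (z₁, z₂)` the blocks `x = R₁ z₁ + R₂ z₂`, `p = R₃ z₁ + R₄ z₂`
of `R(t) z` solve `x' = A x + S p`, `p' = W x - Aᵀ p`. Along two such trajectories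
`(q ⬝ x)' = x ⬝ W y + q ⬝ S p`, which is symmetric in the two trajectories; hence `q ⬝ x - p ⬝ y`
is conserved, and `∫₀¹ (x ⬝ W x + p ⬝ S p) = p(1) ⬝ x(1) - p(0) ⬝ x(0)` with a nonnegative
integrand.

For `z = (v, -D v)` the state vanishes at `t = 1`, so conservation makes `D` symmetric and the
integral equals `v ⬝ D v`; for `z = (0, v)` it equals `v ⬝ Q₂ v`, and it vanishes when
`R₂(1) v = 0`. A vanishing integral forces `W x = 0` and `Bᵀ p = 0` on `[0, 1]`. In the first
case then `x' = A x` and `x(1) = 0`, so `v = x(0) = 0`. In the second, `p' = -Aᵀ p` and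
differentiating `Bᵀ p ≡ 0` makes `p(0)` orthogonal to every column of every `Aᵏ B`, so
controllability gives `v = p(0) = 0`. Finally `F` is a congruence transform of `Q₂`.
-/

variable {ι κ : Type*} [Fintype ι] [Fintype κ]

theorem HasDerivAt.dotProduct {f g : ℝ → ι → ℝ} {f' g' : ι → ℝ} {t : ℝ}
    (hf : HasDerivAt f f' t) (hg : HasDerivAt g g' t) :
    HasDerivAt (fun s => f s ⬝ᵥ g s) (f' ⬝ᵥ g t + f t ⬝ᵥ g') t :=
  (HasDerivAt.fun_sum (u := Finset.univ) fun i _ =>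
    (hasDerivAt_pi.1 hf i).fun_mul (hasDerivAt_pi.1 hg i)).congr_deriv
    (Finset.sum_add_distrib ..)

theorem HasDerivAt.const_mulVec {g : ℝ → ι → ℝ} {g' : ι → ℝ} {t : ℝ} (E : Matrix κ ι ℝ)
    (hg : HasDerivAt g g' t) : HasDerivAt (fun s => E *ᵥ g s) (E *ᵥ g') t :=
  (mulVecLin E).toContinuousLinearMap.hasFDerivAt.comp_hasDerivAt t hg

theorem Matrix.IsSymm.dotProduct_mulVec_comm {M : Matrix ι ι ℝ} (hM : M.IsSymm) (v w : ι → ℝ) :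
    v ⬝ᵥ M *ᵥ w = w ⬝ᵥ M *ᵥ v := by
  rw [dotProduct_mulVec, ← mulVec_transpose, hM.eq, dotProduct_comm]

theorem Matrix.dotProduct_mulVec_add_nonneg {W S : Matrix ι ι ℝ} (hW : W.PosSemidef)
    (hS : S.PosSemidef) (x p : ι → ℝ) : 0 ≤ x ⬝ᵥ W *ᵥ x + p ⬝ᵥ S *ᵥ p := by
  simpa using add_nonneg (hW.dotProduct_mulVec_nonneg x) (hS.dotProduct_mulVec_nonneg p)

theorem Matrix.PosSemidef.mul_mul_transpose_same {U : Matrix κ κ ℝ} (hU : U.PosSemidef)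
    (B : Matrix ι κ ℝ) : (B * U * Bᵀ).PosSemidef := by
  simpa using hU.mul_mul_conjTranspose_same B

theorem Matrix.dotProduct_transpose_mul_mul_mulVec {R : Type*} [CommSemiring R]
    (X : Matrix κ ι R) (M : Matrix κ κ R) (v : ι → R) :
    v ⬝ᵥ (Xᵀ * M * X) *ᵥ v = (X *ᵥ v) ⬝ᵥ M *ᵥ (X *ᵥ v) := by
  rw [← mulVec_mulVec, ← mulVec_mulVec, dotProduct_mulVec, vecMul_transpose]

theorem Matrix.PosDef.mul_mul_transpose_mulVec_eq_zero_iff {U : Matrix κ κ ℝ} (hU : U.PosDef)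
    (B : Matrix ι κ ℝ) (v : ι → ℝ) : (B * U * Bᵀ) *ᵥ v = 0 ↔ Bᵀ *ᵥ v = 0 := by
  refine ⟨fun h => ?_, fun h => by rw [← mulVec_mulVec, h, mulVec_zero]⟩
  by_contra hne
  have hpos := hU.dotProduct_mulVec_pos hne
  rw [star_trivial, ← dotProduct_transpose_mul_mul_mulVec, transpose_transpose, h,
    dotProduct_zero] at hpos
  exact hpos.false

theorem Matrix.dotProduct_mulVec_intervalIntegral {G : ℝ → Matrix ι ι ℝ} (hG : Continuous G)
    (a b : ℝ) (v w : ι → ℝ) :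
    v ⬝ᵥ (of fun i j => ∫ t in a..b, G t i j) *ᵥ w = ∫ t in a..b, v ⬝ᵥ G t *ᵥ w := by
  have hcont (i j : ι) : Continuous fun t => v i * (G t i j * w j) :=
    continuous_const.mul ((hG.matrix_elem i j).mul continuous_const)
  simp only [dotProduct, mulVec, of_apply, Finset.mul_sum]
  rw [intervalIntegral.integral_finsetSum fun i _ =>
    (continuous_finsetSum _ fun j _ => hcont i j).intervalIntegrable a b]
  refine Finset.sum_congr rfl fun i _ => ?_
  rw [intervalIntegral.integral_finsetSum fun j _ => (hcont i j).intervalIntegrable a b]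
  refine Finset.sum_congr rfl fun j _ => ?_
  rw [intervalIntegral.integral_const_mul, intervalIntegral.integral_mul_const]

theorem Matrix.posDef_of_intervalIntegral {G : ℝ → Matrix ι ι ℝ} (hG : Continuous G)
    (hGsymm : ∀ t, (G t).IsSymm) {a b : ℝ}
    (hpos : ∀ v : ι → ℝ, v ≠ 0 → 0 < ∫ t in a..b, v ⬝ᵥ G t *ᵥ v) :
    (of fun i j => ∫ t in a..b, G t i j).PosDef := by
  refine .of_dotProduct_mulVec_pos (isHermitian_iff_isSymm.2 <| IsSymm.ext fun i j => ?_)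
    fun v hv => ?_
  · simp only [of_apply, (hGsymm _).apply]
  · rw [star_trivial, dotProduct_mulVec_intervalIntegral hG]
    exact hpos v hv

section

variable [DecidableEq ι]

theorem Matrix.isSymm_of_dotProduct_mulVec_comm {M : Matrix ι ι ℝ}
    (hM : ∀ v w : ι → ℝ, v ⬝ᵥ M *ᵥ w = w ⬝ᵥ M *ᵥ v) : M.IsSymm :=
  IsSymm.ext fun i j => by simpa using hM (Pi.single j 1) (Pi.single i 1)

theorem mul_pow_mulVec_eq_zero_of_hasDerivAt {g : ℝ → ι → ℝ} {C : Matrix ι ι ℝ}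
    {E : Matrix κ ι ℝ} {s : Set ℝ} (hs : IsOpen s) (hg : ∀ t ∈ s, HasDerivAt g (C *ᵥ g t) t)
    (hE : ∀ t ∈ s, E *ᵥ g t = 0) (k : ℕ) : ∀ t ∈ s, (E * C ^ k) *ᵥ g t = 0 := by
  induction k with
  | zero => simpa using hE
  | succ k ih =>
    intro t ht
    have hzero : HasDerivAt (fun t => (E * C ^ k) *ᵥ g t) 0 t :=
      (hasDerivAt_const t 0).congr_of_eventuallyEq (Filter.eventually_of_mem (hs.mem_nhds ht) ih)
    rw [pow_succ, ← Matrix.mul_assoc, ← mulVec_mulVec]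
    exact ((hg t ht).const_mulVec (E * C ^ k)).unique hzero

theorem eq_zero_of_kalmanSpan_eq_top {A : Matrix ι ι ℝ} {B : Matrix ι κ ℝ}
    (hctrl : kalmanSpan A B = ⊤) {w : ι → ℝ} (hw : ∀ k, (A ^ k * B)ᵀ *ᵥ w = 0) : w = 0 := by
  have hle : kalmanSpan A B ≤ LinearMap.ker (dotProductBilin ℝ ℝ w) :=
    Submodule.span_le.2 <| Set.iUnion₂_subset fun k _ => Set.range_subset_iff.2 fun i =>
      (dotProduct_comm _ _).trans (congrFun (hw k) i)
  have hww : w ⬝ᵥ w = 0 := hle (hctrl ▸ Submodule.mem_top : w ∈ kalmanSpan A B)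
  exact dotProduct_self_eq_zero.1 hww

theorem mexp_zero_smul (C : Matrix ι ι ℝ) : mexp ((0 : ℝ) • C) = 1 := by
  rw [zero_smul, mexp, NormedSpace.exp_zero]

theorem hasDerivAt_mexp_smul_mulVec (C : Matrix ι ι ℝ) (z : ι → ℝ) (t : ℝ) :
    HasDerivAt (fun s : ℝ => mexp (s • C) *ᵥ z) (C *ᵥ (mexp (t • C) *ᵥ z)) t := by
  let _ : NormedRing (Matrix ι ι ℝ) := Matrix.linftyOpNormedRing
  let _ : NormedAlgebra ℝ (Matrix ι ι ℝ) := Matrix.linftyOpNormedAlgebra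
  rw [mulVec_mulVec]
  exact ((mulVecBilin ℝ ℝ).flip z).toContinuousLinearMap.hasFDerivAt.comp_hasDerivAt t
    (hasDerivAt_exp_smul_const' (𝕂 := ℝ) C t)

theorem continuous_mexp_smul (C : Matrix ι ι ℝ) : Continuous fun t : ℝ => mexp (t • C) := by
  let _ : NormedRing (Matrix ι ι ℝ) := Matrix.linftyOpNormedRing
  let _ : NormedAlgebra ℝ (Matrix ι ι ℝ) := Matrix.linftyOpNormedAlgebra
  exact continuous_iff_continuousAt.2 fun t =>
    (hasDerivAt_exp_smul_const' (𝕂 := ℝ) C t).continuousAt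

end

structure IsHamiltonianTrajectory (A S W : Matrix ι ι ℝ) (x p : ℝ → ι → ℝ) : Prop where
  hasDerivAt_state : ∀ t, HasDerivAt x (A *ᵥ x t + S *ᵥ p t) t
  hasDerivAt_costate : ∀ t, HasDerivAt p (W *ᵥ x t - Aᵀ *ᵥ p t) t

namespace IsHamiltonianTrajectory

variable {A S W : Matrix ι ι ℝ} {x p y q : ℝ → ι → ℝ}

theorem continuous_state (h : IsHamiltonianTrajectory A S W x p) : Continuous x :=
  continuous_iff_continuousAt.2 fun t => (h.hasDerivAt_state t).continuousAt

theorem continuous_costate (h : IsHamiltonianTrajectory A S W x p) : Continuous p :=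
  continuous_iff_continuousAt.2 fun t => (h.hasDerivAt_costate t).continuousAt

theorem hasDerivAt_dotProduct (hf : IsHamiltonianTrajectory A S W x p)
    (hg : IsHamiltonianTrajectory A S W y q) (t : ℝ) :
    HasDerivAt (fun t => q t ⬝ᵥ x t) (x t ⬝ᵥ W *ᵥ y t + q t ⬝ᵥ S *ᵥ p t) t := by
  convert (hg.hasDerivAt_costate t).dotProduct (hf.hasDerivAt_state t) using 1
  rw [sub_dotProduct, dotProduct_add, mulVec_transpose, ← dotProduct_mulVec,
    dotProduct_comm (W *ᵥ y t)]
  abel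

theorem continuous_dotProduct_add_dotProduct (hf : IsHamiltonianTrajectory A S W x p)
    (hg : IsHamiltonianTrajectory A S W y q) :
    Continuous fun t => x t ⬝ᵥ W *ᵥ y t + q t ⬝ᵥ S *ᵥ p t :=
  (hf.continuous_state.dotProduct (continuous_const.matrix_mulVec hg.continuous_state)).add
    (hg.continuous_costate.dotProduct (continuous_const.matrix_mulVec hf.continuous_costate))

theorem integral_eq_dotProduct_sub (hf : IsHamiltonianTrajectory A S W x p)
    (hg : IsHamiltonianTrajectory A S W y q) (a b : ℝ) :
    ∫ t in a..b, (x t ⬝ᵥ W *ᵥ y t + q t ⬝ᵥ S *ᵥ p t) = q b ⬝ᵥ x b - q a ⬝ᵥ x a :=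
  intervalIntegral.integral_eq_sub_of_hasDerivAt (fun t _ => hf.hasDerivAt_dotProduct hg t)
    ((hf.continuous_dotProduct_add_dotProduct hg).intervalIntegrable a b)

theorem dotProduct_sub_dotProduct_eq (hf : IsHamiltonianTrajectory A S W x p)
    (hg : IsHamiltonianTrajectory A S W y q) (hW : W.IsSymm) (hS : S.IsSymm) (a b : ℝ) :
    q b ⬝ᵥ x b - p b ⬝ᵥ y b = q a ⬝ᵥ x a - p a ⬝ᵥ y a := by
  have hsymm : ∫ t in a..b, (x t ⬝ᵥ W *ᵥ y t + q t ⬝ᵥ S *ᵥ p t) =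
      ∫ t in a..b, (y t ⬝ᵥ W *ᵥ x t + p t ⬝ᵥ S *ᵥ q t) :=
    intervalIntegral.integral_congr fun t _ => by
      rw [hW.dotProduct_mulVec_comm, hS.dotProduct_mulVec_comm]
  rw [hf.integral_eq_dotProduct_sub hg, hg.integral_eq_dotProduct_sub hf] at hsymm
  linarith

theorem mulVec_eq_zero_of_integral_eq_zero (hf : IsHamiltonianTrajectory A S W x p)
    (hW : W.PosSemidef) (hS : S.PosSemidef) {a b : ℝ} (hab : a < b)
    (h : ∫ t in a..b, (x t ⬝ᵥ W *ᵥ x t + p t ⬝ᵥ S *ᵥ p t) = 0) :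
    ∀ t ∈ Icc a b, W *ᵥ x t = 0 ∧ S *ᵥ p t = 0 := by
  intro t ht
  by_contra hne
  have hpos : 0 < x t ⬝ᵥ W *ᵥ x t + p t ⬝ᵥ S *ᵥ p t := by
    refine (dotProduct_mulVec_add_nonneg hW hS _ _).lt_of_ne' fun h0 => hne ?_
    rw [add_eq_zero_iff_of_nonneg (by simpa using hW.dotProduct_mulVec_nonneg (x t))
      (by simpa using hS.dotProduct_mulVec_nonneg (p t))] at h0
    exact ⟨(hW.dotProduct_mulVec_zero_iff _).1 (by simpa using h0.1),
      (hS.dotProduct_mulVec_zero_iff _).1 (by simpa using h0.2)⟩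
  exact (intervalIntegral.integral_pos hab
    (hf.continuous_dotProduct_add_dotProduct hf).continuousOn
    (fun s _ => dotProduct_mulVec_add_nonneg hW hS _ _) ⟨t, ht, hpos⟩).ne' h

theorem state_eq_zero (hf : IsHamiltonianTrajectory A S W x p) {a b : ℝ} (hab : a ≤ b)
    (hSp : ∀ t ∈ Icc a b, S *ᵥ p t = 0) (hxb : x b = 0) : x a = 0 := by
  have hlip := (mulVecLin A).toContinuousLinearMap.lipschitz
  refine ODE_solution_unique_of_mem_Icc_left (v := fun _ y => A *ᵥ y) (s := fun _ => univ)
    (fun _ _ => hlip.lipschitzOnWith) hf.continuous_state.continuousOn (fun t ht => ?_)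
    (fun _ _ => trivial) continuousOn_const
    (fun t _ => by simpa using (hasDerivAt_const t (0 : ι → ℝ)).hasDerivWithinAt)
    (fun _ _ => trivial) hxb ⟨le_rfl, hab⟩
  simpa [hSp t (Ioc_subset_Icc_self ht)] using (hf.hasDerivAt_state t).hasDerivWithinAt

theorem costate_eq_zero [DecidableEq ι] {B : Matrix ι κ ℝ} (hctrl : kalmanSpan A B = ⊤)
    (hf : IsHamiltonianTrajectory A S W x p) {a b : ℝ} (hab : a < b)
    (hWx : ∀ t ∈ Ioo a b, W *ᵥ x t = 0) (hBp : ∀ t ∈ Ioo a b, Bᵀ *ᵥ p t = 0) : p a = 0 := by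
  have hp (t : ℝ) (ht : t ∈ Ioo a b) : HasDerivAt p (-Aᵀ *ᵥ p t) t := by
    simpa [hWx t ht, neg_mulVec] using hf.hasDerivAt_costate t
  refine eq_zero_of_kalmanSpan_eq_top hctrl fun k => ?_
  have hk : (Bᵀ * (-Aᵀ) ^ k) *ᵥ p a = 0 :=
    (isClosed_eq (continuous_const.matrix_mulVec hf.continuous_costate) continuous_const
      |>.closure_subset_iff.2 (mul_pow_mulVec_eq_zero_of_hasDerivAt isOpen_Ioo hp hBp k))
      (by rw [closure_Ioo hab.ne]; exact left_mem_Icc.2 hab.le)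
  rw [transpose_mul, transpose_pow]
  rcases k.even_or_odd with hk' | hk'
  · simpa [hk'.neg_pow, neg_mulVec] using hk
  · simpa [hk'.neg_pow, neg_mulVec] using hk

end IsHamiltonianTrajectory

theorem posDef_of_forall_exists_isHamiltonianTrajectory [DecidableEq ι] {A S W D : Matrix ι ι ℝ}
    (hW : W.PosSemidef) (hS : S.PosSemidef)
    (hD : ∀ v, ∃ x p, IsHamiltonianTrajectory A S W x p ∧ x 0 = v ∧ p 0 = -(D *ᵥ v) ∧ x 1 = 0) :
    D.PosDef := by
  refine .of_dotProduct_mulVec_pos (isHermitian_iff_isSymm.2 <|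
    isSymm_of_dotProduct_mulVec_comm fun v w => ?_) fun v hv => ?_
  · obtain ⟨x, p, hf, hx0, hp0, hx1⟩ := hD v
    obtain ⟨y, q, hg, hy0, hq0, hy1⟩ := hD w
    have := hf.dotProduct_sub_dotProduct_eq hg (isHermitian_iff_isSymm.1 hW.isHermitian)
      (isHermitian_iff_isSymm.1 hS.isHermitian) 0 1
    rw [hx0, hx1, hy0, hy1, hp0, hq0] at this
    simp only [dotProduct_zero, sub_zero, neg_dotProduct, dotProduct_comm (D *ᵥ _)] at this
    linarith
  · obtain ⟨x, p, hf, hx0, hp0, hx1⟩ := hD v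
    have henergy := hf.integral_eq_dotProduct_sub hf 0 1
    rw [hx0, hx1, hp0, dotProduct_zero, neg_dotProduct, zero_sub, neg_neg, dotProduct_comm]
      at henergy
    rw [star_trivial, ← henergy]
    refine (intervalIntegral.integral_nonneg zero_le_one fun t _ =>
      dotProduct_mulVec_add_nonneg hW hS _ _).lt_of_ne' fun h0 => hv ?_
    have hvanish := hf.mulVec_eq_zero_of_integral_eq_zero hW hS one_pos h0
    rw [← hx0]
    exact hf.state_eq_zero zero_le_one (fun t ht => (hvanish t ht).2) hx1

section

variable [DecidableEq ι]

/-- With `S = B U⁻¹ Bᵀ` this is the matrix function `R` of the statement. -/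
noncomputable def hamiltonianFlow (A S W : Matrix ι ι ℝ) (t : ℝ) : Matrix (ι ⊕ ι) (ι ⊕ ι) ℝ :=
  mexp (t • fromBlocks A S W (-Aᵀ))

theorem hamiltonianFlow_zero (A S W : Matrix ι ι ℝ) : hamiltonianFlow A S W 0 = 1 :=
  mexp_zero_smul _

variable {A S W : Matrix ι ι ℝ}

theorem isHamiltonianTrajectory_hamiltonianFlow (v w : ι → ℝ) :
    IsHamiltonianTrajectory A S W
      (fun t => (hamiltonianFlow A S W t).toBlocks₁₁ *ᵥ v +
        (hamiltonianFlow A S W t).toBlocks₁₂ *ᵥ w)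
      (fun t => (hamiltonianFlow A S W t).toBlocks₂₁ *ᵥ v +
        (hamiltonianFlow A S W t).toBlocks₂₂ *ᵥ w) := by
  set R := hamiltonianFlow A S W
  have hblocks (t : ℝ) : R t *ᵥ Sum.elim v w =
      Sum.elim ((R t).toBlocks₁₁ *ᵥ v + (R t).toBlocks₁₂ *ᵥ w)
        ((R t).toBlocks₂₁ *ᵥ v + (R t).toBlocks₂₂ *ᵥ w) := by
    conv_lhs => rw [← fromBlocks_toBlocks (R t), fromBlocks_mulVec]
    rw [Sum.elim_comp_inl, Sum.elim_comp_inr]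
  have hderiv (t : ℝ) : HasDerivAt (fun s => R s *ᵥ Sum.elim v w)
      (fromBlocks A S W (-Aᵀ) *ᵥ (R t *ᵥ Sum.elim v w)) t :=
    hasDerivAt_mexp_smul_mulVec _ _ t
  simp only [hblocks, fromBlocks_mulVec, Sum.elim_comp_inl,
    Sum.elim_comp_inr, neg_mulVec, ← sub_eq_add_neg] at hderiv
  exact ⟨fun t => hasDerivAt_pi.2 fun i => hasDerivAt_pi.1 (hderiv t) (Sum.inl i),
    fun t => hasDerivAt_pi.2 fun i => hasDerivAt_pi.1 (hderiv t) (Sum.inr i)⟩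

theorem isHamiltonianTrajectory_hamiltonianFlow_toBlocks₁₂ (w : ι → ℝ) :
    IsHamiltonianTrajectory A S W (fun t => (hamiltonianFlow A S W t).toBlocks₁₂ *ᵥ w)
      (fun t => (hamiltonianFlow A S W t).toBlocks₂₂ *ᵥ w) := by
  simpa using isHamiltonianTrajectory_hamiltonianFlow (A := A) (S := S) (W := W) 0 w

theorem posDef_of_toBlocks₁₂_mul_eq_toBlocks₁₁ (hW : W.PosSemidef) (hS : S.PosSemidef)
    {D : Matrix ι ι ℝ}
    (hD : (hamiltonianFlow A S W 1).toBlocks₁₂ * D = (hamiltonianFlow A S W 1).toBlocks₁₁) :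
    D.PosDef :=
  posDef_of_forall_exists_isHamiltonianTrajectory hW hS fun v =>
    ⟨_, _, isHamiltonianTrajectory_hamiltonianFlow (A := A) (S := S) (W := W) v (-(D *ᵥ v)),
      by simp [hamiltonianFlow_zero, ← fromBlocks_one],
      by simp [hamiltonianFlow_zero, ← fromBlocks_one],
      by simp [mulVec_neg, mulVec_mulVec, hD]⟩

end

section

variable [DecidableEq ι] [DecidableEq κ] {A W : Matrix ι ι ℝ} {B : Matrix ι κ ℝ}
  {U : Matrix κ κ ℝ}

theorem eq_zero_of_integral_hamiltonianFlow_eq_zero (hW : W.PosSemidef) (hU : U.PosDef)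
    (hctrl : kalmanSpan A B = ⊤) {w : ι → ℝ}
    (h : ∫ t in (0 : ℝ)..1,
      ((hamiltonianFlow A (B * U⁻¹ * Bᵀ) W t).toBlocks₁₂ *ᵥ w) ⬝ᵥ
          W *ᵥ ((hamiltonianFlow A (B * U⁻¹ * Bᵀ) W t).toBlocks₁₂ *ᵥ w) +
        ((hamiltonianFlow A (B * U⁻¹ * Bᵀ) W t).toBlocks₂₂ *ᵥ w) ⬝ᵥ
          (B * U⁻¹ * Bᵀ) *ᵥ ((hamiltonianFlow A (B * U⁻¹ * Bᵀ) W t).toBlocks₂₂ *ᵥ w) = 0) :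
    w = 0 := by
  have hf := isHamiltonianTrajectory_hamiltonianFlow_toBlocks₁₂ (A := A)
    (S := B * U⁻¹ * Bᵀ) (W := W) w
  have hS := hU.inv.posSemidef.mul_mul_transpose_same B
  have hvanish (t : ℝ) (ht : t ∈ Ioo (0 : ℝ) 1) :=
    hf.mulVec_eq_zero_of_integral_eq_zero hW hS one_pos h t (Ioo_subset_Icc_self ht)
  simpa [hamiltonianFlow_zero, ← fromBlocks_one] using
    hf.costate_eq_zero hctrl one_pos (fun t ht => (hvanish t ht).1)
      fun t ht => (hU.inv.mul_mul_transpose_mulVec_eq_zero_iff B _).1 (hvanish t ht).2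

theorem isUnit_toBlocks₁₂_hamiltonianFlow (hW : W.PosSemidef) (hU : U.PosDef)
    (hctrl : kalmanSpan A B = ⊤) :
    IsUnit (hamiltonianFlow A (B * U⁻¹ * Bᵀ) W 1).toBlocks₁₂ := by
  refine mulVec_injective_iff_isUnit.1 <| (injective_iff_map_eq_zero (mulVecLin _)).2
    fun w hw => eq_zero_of_integral_hamiltonianFlow_eq_zero hW hU hctrl ?_
  rw [(isHamiltonianTrajectory_hamiltonianFlow_toBlocks₁₂ w).integral_eq_dotProduct_sub
    (isHamiltonianTrajectory_hamiltonianFlow_toBlocks₁₂ w) 0 1]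
  rw [mulVecLin_apply] at hw
  simp [hw, hamiltonianFlow_zero, ← fromBlocks_one]

theorem posDef_integral_hamiltonianFlow (hW : W.PosSemidef) (hU : U.PosDef)
    (hctrl : kalmanSpan A B = ⊤) :
    (of fun i j => ∫ t in (0 : ℝ)..1,
      (((hamiltonianFlow A (B * U⁻¹ * Bᵀ) W t).toBlocks₁₂)ᵀ * W *
          (hamiltonianFlow A (B * U⁻¹ * Bᵀ) W t).toBlocks₁₂ +
        ((hamiltonianFlow A (B * U⁻¹ * Bᵀ) W t).toBlocks₂₂)ᵀ * B * U⁻¹ * Bᵀ *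
          (hamiltonianFlow A (B * U⁻¹ * Bᵀ) W t).toBlocks₂₂) i j).PosDef := by
  set Φ := hamiltonianFlow A (B * U⁻¹ * Bᵀ) W
  have hS := hU.inv.posSemidef.mul_mul_transpose_same B
  have h₁₂ : Continuous fun t => (Φ t).toBlocks₁₂ :=
    continuous_matrix fun _ _ => (continuous_mexp_smul _).matrix_elem _ _
  have h₂₂ : Continuous fun t => (Φ t).toBlocks₂₂ :=
    continuous_matrix fun _ _ => (continuous_mexp_smul _).matrix_elem _ _
  refine posDef_of_intervalIntegral (by fun_prop) (fun t => ?_) fun w hw => ?_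
  · have hWT := (isHermitian_iff_isSymm.1 hW.isHermitian).eq
    have hUT := (isHermitian_iff_isSymm.1 hU.inv.isHermitian).eq
    simp only [IsSymm, transpose_add, Matrix.transpose_mul, transpose_transpose, hWT, hUT,
      Matrix.mul_assoc]
  · have hquad (t : ℝ) : w ⬝ᵥ ((Φ t).toBlocks₁₂ᵀ * W * (Φ t).toBlocks₁₂ +
        (Φ t).toBlocks₂₂ᵀ * B * U⁻¹ * Bᵀ * (Φ t).toBlocks₂₂) *ᵥ w =
        ((Φ t).toBlocks₁₂ *ᵥ w) ⬝ᵥ W *ᵥ ((Φ t).toBlocks₁₂ *ᵥ w) +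
        ((Φ t).toBlocks₂₂ *ᵥ w) ⬝ᵥ (B * U⁻¹ * Bᵀ) *ᵥ ((Φ t).toBlocks₂₂ *ᵥ w) := by
      simp only [add_mulVec, dotProduct_add, ← dotProduct_transpose_mul_mul_mulVec,
        Matrix.mul_assoc]
    simp only [hquad]
    exact (intervalIntegral.integral_nonneg zero_le_one fun t _ =>
      dotProduct_mulVec_add_nonneg hW hS _ _).lt_of_ne'
      fun h0 => hw (eq_zero_of_integral_hamiltonianFlow_eq_zero hW hU hctrl h0)

end

/-- in the controllable case, the matrices `D = R₂(1)⁻¹R₁(1)` and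
`F = (R₂(1)⁻¹)* Q₂ R₂(1)⁻¹` are symmetric positive definite. -/
theorem D_F_posDef_of_controllable (n m : ℕ)
    (A : Matrix (Fin n) (Fin n) ℝ) (B : Matrix (Fin n) (Fin m) ℝ)
    (W : Matrix (Fin n) (Fin n) ℝ) (hW : W.PosSemidef)
    (U : Matrix (Fin m) (Fin m) ℝ) (hU : U.PosDef)
    (hctrl : kalmanSpan A B = ⊤)
    (R : ℝ → Matrix (Fin n ⊕ Fin n) (Fin n ⊕ Fin n) ℝ)
    (hR : R = fun t => mexp (t • Matrix.fromBlocks A (B * U⁻¹ * Bᵀ) W (-Aᵀ)))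
    (Q₂ D F : Matrix (Fin n) (Fin n) ℝ)
    (hQ₂ : Q₂ = Matrix.of fun i j => ∫ t in (0:ℝ)..1,
      (((R t).toBlocks₁₂)ᵀ * W * (R t).toBlocks₁₂ +
        ((R t).toBlocks₂₂)ᵀ * B * U⁻¹ * Bᵀ * (R t).toBlocks₂₂) i j)
    (hD : D = ((R 1).toBlocks₁₂)⁻¹ * (R 1).toBlocks₁₁)
    (hF : F = (((R 1).toBlocks₁₂)⁻¹)ᵀ * Q₂ * ((R 1).toBlocks₁₂)⁻¹) :
    (Dᵀ = D ∧ D.PosDef) ∧ (Fᵀ = F ∧ F.PosDef) := by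
  obtain rfl : R = hamiltonianFlow A (B * U⁻¹ * Bᵀ) W := hR
  have hS := hU.inv.posSemidef.mul_mul_transpose_same B
  have hR₂ := isUnit_toBlocks₁₂_hamiltonianFlow hW hU hctrl
  have hQ : Q₂.PosDef := hQ₂ ▸ posDef_integral_hamiltonianFlow hW hU hctrl
  have hDpos : D.PosDef := posDef_of_toBlocks₁₂_mul_eq_toBlocks₁₁ (A := A) hW hS <| by
    rw [hD]
    exact mul_nonsing_inv_cancel_left (h := (isUnit_iff_isUnit_det _).1 hR₂) ..
  have hFpos : F.PosDef := by
    have := (IsUnit.posDef_star_left_conjugate_iff (isUnit_nonsing_inv_iff.2 hR₂)).2 hQ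
    rwa [star_eq_conjTranspose, conjTranspose_eq_transpose_of_trivial, ← hF] at this
  exact ⟨⟨(isHermitian_iff_isSymm.1 hDpos.isHermitian).eq, hDpos⟩,
    ⟨(isHermitian_iff_isSymm.1 hFpos.isHermitian).eq, hFpos⟩⟩
end
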